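/- If P is observable (and controllable), then for any observation s_o and any x ∈ NS(s_o) with x ∉ F_P, every state x' ≠ x in the unobservable reach UR_{γ̂_leg(NS(s_o))}(x) satisfies ξ(x') < ξ(x); in particular max_{x' ∈ UR_{γ̂_leg(NS(s_o))}(x)} ξ(x') ≤ ξ(x) with strict inequality on all states reached via at least one transition. -/

import Mathlib

open scoped Classical

/-- Extended (partial) transition function on finite event sequences. -/
def runOf {X E : Type} (δ : X → E → Option X) : List E → X → Option X
  | [], x => some x
  | e :: s, x => (δ x e).bind (runOf δ s)

/-- A string consisting only of unobservable events. -/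
def UOString {E : Type} (uo : E → Prop) (s : List E) : Prop := ∀ e ∈ s, uo e

/-- Natural projection erasing unobservable events. -/
noncomputable def proj {E : Type} (uo : E → Prop) (s : List E) : List E :=
  s.filter (fun e => decide (¬ uo e))

/-- Legal control pattern: events with some strictly rank-decreasing occurrence
within the unobservable reach of `x`. -/
def gammaLeg {X E : Type} (δ : X → E → Option X) (uo : E → Prop)
    (ξ : X → ℕ) (x : X) : Set E :=
  {σ | ∃ s y z, UOString uo s ∧ runOf δ s x = some y ∧ δ y σ = some z ∧ ξ z < ξ y}

/-- Unobservable reach of `x` under control pattern `γ`. -/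
def UR {X E : Type} (δ : X → E → Option X) (uo : E → Prop)
    (γ : Set E) (x : X) : Set X :=
  {x' | ∃ u : List E, (∀ e ∈ u, uo e ∧ e ∈ γ) ∧ runOf δ u x = some x'}

/-- Membership in the next-state estimate `NS(s_o)` after observation `s_o`. -/
inductive NSmem {X E : Type} (δ : X → E → Option X) (uo : E → Prop)
    (x0 : X) : List E → X → Prop
  | init : NSmem δ uo x0 [] x0
  | step {so : List E} {x x' x'' : X} {σ : E} :
      NSmem δ uo x0 so x →
      x' ∈ UR δ uo Set.univ x →
      ¬ uo σ → δ x' σ = some x'' → NSmem δ uo x0 (so ++ [σ]) x''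

/-- Joint legal control pattern of the state estimate. -/
def gammaLegNS {X E : Type} (δ : X → E → Option X) (uo : E → Prop) (ξ : X → ℕ)
    (x0 : X) (so : List E) : Set E :=
  {σ | ∃ x, NSmem δ uo x0 so x ∧ σ ∈ gammaLeg δ uo ξ x}

/-- Permissive control pattern at state `x` and step `k`. -/
def gammaPer {X E : Type} (δ : X → E → Option X) (uo : E → Prop) (ξ : X → ℕ)
    (η : ℕ → ℝ) (x : X) (k : ℕ) : Set E :=
  {σ | ∀ s z, UOString uo s → runOf δ (s ++ [σ]) x = some z → (ξ z : ℝ) < η k}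

/-- Joint permissive control pattern of the state estimate. -/
def gammaPerNS {X E : Type} (δ : X → E → Option X) (uo : E → Prop) (ξ : X → ℕ)
    (η : ℕ → ℝ) (x0 : X) (so : List E) (k : ℕ) : Set E :=
  {σ | ∀ x, NSmem δ uo x0 so x → σ ∈ gammaPer δ uo ξ η x k}

/-- The on-line supervisor's control action after observation `so`. -/
def supAct {X E : Type} (δ : X → E → Option X) (uo : E → Prop) (ξ : X → ℕ)
    (η : ℕ → ℝ) (x0 : X) (so : List E) : Set E :=
  gammaLegNS δ uo ξ x0 so ∪ gammaPerNS δ uo ξ η x0 so so.length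

/-- `ξ̂(x)`: min over controllable successors' ranks if no uncontrollable event
is defined at `x`, else max over uncontrollable successors' ranks. -/
noncomputable def hatXi {X E : Type} (δ : X → E → Option X) (uc : E → Prop)
    (ξ : X → ℕ) (x : X) : ℕ :=
  if ∀ e, uc e → δ x e = none then
    sInf {n | ∃ e y, ¬ uc e ∧ δ x e = some y ∧ ξ y = n}
  else
    sSup {n | ∃ e y, uc e ∧ δ x e = some y ∧ ξ y = n}

/-- The update operator `up_α(r, x)`. -/
noncomputable def upA {X : Type} (α : ℕ) (F : Set X) (x : X) (r : ℕ) : ℕ :=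
  if x ∉ F ∧ r < α then r + 1 else r

/-- Observability of the product automaton w.r.t. `ξ` and the projection. -/
def Observable {X E : Type} (δ : X → E → Option X) (uo : E → Prop)
    (ξ : X → ℕ) (x0 : X) : Prop :=
  ∀ s s' : List E, ∀ σ : E,
    (runOf δ s x0).isSome → (runOf δ s' x0).isSome →
    proj uo s = proj uo s' →
    (∃ y z, runOf δ s x0 = some y ∧ δ y σ = some z ∧ ξ z < ξ y) →
    (runOf δ (s' ++ [σ]) x0).isSome →
    ∃ y z, runOf δ s' x0 = some y ∧ δ y σ = some z ∧ ξ z < ξ y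

/-- The list of states visited along a run. -/
def visited {X E : Type} (δ : X → E → Option X) : List E → X → Option (List X)
  | [], x => some [x]
  | e :: s, x => (δ x e).bind fun y => (visited δ s y).map (fun l => x :: l)

/-! An event of `γ̂_leg(NS(s_o))` has a rank-decreasing occurrence after some run whose
observation is `s_o`. Observability transfers this to every run with the same observation, and
appending an unobservable event does not change the observation, so along an unobservable run
from `x ∈ NS(s_o)` using only such events each transition strictly decreases `ξ`. -/

section Automaton

variable {X E : Type} {δ : X → E → Option X} {uo : E → Prop}

theorem runOf_append (s t : List E) (x : X) :
    runOf δ (s ++ t) x = (runOf δ s x).bind (runOf δ t) := by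
  induction s generalizing x with
  | nil => rfl
  | cons e s ih => simp only [List.cons_append, runOf, Option.bind_assoc, ih]

theorem runOf_append_singleton {s : List E} {x y : X} {e : E} (h : runOf δ s x = some y) :
    runOf δ (s ++ [e]) x = δ y e := by
  simp [runOf_append, h, runOf]

theorem proj_append (s t : List E) : proj uo (s ++ t) = proj uo s ++ proj uo t :=
  List.filter_append ..

theorem proj_eq_nil_of_UOString {s : List E} (h : UOString uo s) : proj uo s = [] := by
  simpa [proj, UOString] using h

theorem proj_append_of_UOString {s t : List E} (h : UOString uo t) :
    proj uo (s ++ t) = proj uo s := by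
  rw [proj_append, proj_eq_nil_of_UOString h, List.append_nil]

theorem NSmem.exists_run {x0 : X} {so : List E} {x : X} (h : NSmem δ uo x0 so x) :
    ∃ t, runOf δ t x0 = some x ∧ proj uo t = so := by
  induction h with
  | init => exact ⟨[], rfl, rfl⟩
  | @step _ _ _ _ σ _ hur hσ hδ ih =>
    obtain ⟨t, ht, rfl⟩ := ih
    obtain ⟨u, hu, hru⟩ := hur
    refine ⟨t ++ u ++ [σ], ?_, ?_⟩
    · rw [runOf_append_singleton (by rw [runOf_append, ht]; exact hru), hδ]
    · rw [proj_append, proj_append_of_UOString fun e he => (hu e he).1]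
      simp [proj, hσ]

variable {ξ : X → ℕ} {x0 : X}

theorem Observable.rank_lt_of_mem_gammaLegNS (hobs : Observable δ uo ξ x0)
    {t : List E} {y z : X} {e : E} (ht : runOf δ t x0 = some y)
    (he : e ∈ gammaLegNS δ uo ξ x0 (proj uo t)) (hz : δ y e = some z) : ξ z < ξ y := by
  obtain ⟨x, hx, s, w, w', hs, hsw, hww', hlt⟩ := he
  obtain ⟨tx, htx, hptx⟩ := hx.exists_run
  have hrun : runOf δ (tx ++ s) x0 = some w := by rw [runOf_append, htx]; exact hsw
  obtain ⟨y', z', hy', hz', hlt'⟩ := hobs (tx ++ s) t e (by simp [hrun]) (by simp [ht])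
    (by rw [proj_append_of_UOString hs, hptx]) ⟨w, w', hrun, hww', hlt⟩
    (by simp [runOf_append_singleton ht, hz])
  obtain rfl : y' = y := Option.some_injective _ (hy'.symm.trans ht)
  obtain rfl : z' = z := Option.some_injective _ (hz'.symm.trans hz)
  exact hlt'

theorem Observable.rank_add_length_le (hobs : Observable δ uo ξ x0) {so u : List E}
    (hu : ∀ e ∈ u, uo e ∧ e ∈ gammaLegNS δ uo ξ x0 so) :
    ∀ {t : List E} {y x' : X}, runOf δ t x0 = some y → proj uo t = so →
      runOf δ u y = some x' → ξ x' + u.length ≤ ξ y := by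
  induction u with
  | nil =>
    rintro t y x' - - ⟨⟩
    simp
  | cons e u ih =>
    intro t y x' ht hpt hrun
    obtain ⟨he_uo, he_leg⟩ := hu e List.mem_cons_self
    obtain ⟨z, hz, hzx'⟩ := Option.bind_eq_some_iff.mp hrun
    have hzy : ξ z < ξ y := hobs.rank_lt_of_mem_gammaLegNS ht (hpt ▸ he_leg) hz
    have hz_next : ξ x' + u.length ≤ ξ z :=
      ih (fun a ha => hu a (List.mem_cons_of_mem e ha)) (runOf_append_singleton ht ▸ hz)
        (by rw [proj_append_of_UOString (by simpa [UOString] using he_uo), hpt]) hzx'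
    simp only [List.length_cons]
    omega

end Automaton

theorem stmt8_general {X E : Type} (δ : X → E → Option X) (uo : E → Prop)
    (F : Set X) (x0 : X) (ξ : X → ℕ)
    (hobs : Observable δ uo ξ x0)
    (so : List E) :
    ∀ x : X, NSmem δ uo x0 so x → x ∉ F →
      ∀ x' ∈ UR δ uo (gammaLegNS δ uo ξ x0 so) x,
        ξ x' ≤ ξ x ∧ (x' ≠ x → ξ x' < ξ x) := by
  rintro x hx - x' ⟨u, hu, hrun⟩
  obtain ⟨t, ht, hpt⟩ := hx.exists_run
  have hbound := hobs.rank_add_length_le hu ht hpt hrun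
  refine ⟨by omega, fun hne => ?_⟩
  have hu_ne : u ≠ [] := by
    rintro rfl
    exact hne (Option.some_injective _ hrun).symm
  have := List.length_pos_iff.mpr hu_ne
  omega

/-- under observability (and controllability), every state in the
unobservable reach of `x ∈ NS(s_o)` under the joint legal pattern has rank at
most `ξ(x)`, strictly less for states other than `x` itself. -/
theorem stmt8 {X E : Type} (δ : X → E → Option X) (uo : E → Prop)
    (F : Set X) (x0 : X) (ξ : X → ℕ) (α : ℕ)
    (hctrl : ξ x0 < α)
    (hobs : Observable δ uo ξ x0)
    (so : List E)
    (hso : ∃ t : List E, (runOf δ t x0).isSome ∧ proj uo t = so) :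
    ∀ x : X, NSmem δ uo x0 so x → x ∉ F →
      ∀ x' ∈ UR δ uo (gammaLegNS δ uo ξ x0 so) x,
        ξ x' ≤ ξ x ∧ (x' ≠ x → ξ x' < ξ x) :=
  stmt8_general δ uo F x0 ξ hobs so
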